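/- Fix real numbers γ_E > 0, α > 0, and R > 0. Then lim_{γ_D → ∞} γ_D · 𝒫₃(α·γ_D, γ_D, γ_E, R) = (2^R − 1)·(1 + 1/α) + 2^R·γ_E·(1 + 1/α). In particular, with γ_R = α·γ_D and γ_E fixed, the Case III secrecy outage probability satisfies 𝒫₃ ≈ 𝓜₃·γ_D^{−1} with 𝓜₃ = (2^R − 1)(1 + 1/α) + 2^R·γ_E·(1 + 1/α) > 0 as γ_D → ∞, so the secrecy diversity order is 1. -/

import Mathlib

open Filter Real

/-- Case III closed-form secrecy outage probability. -/
noncomputable def P3 (γR γD γE R : ℝ) : ℝ :=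
  1 - Real.exp (-((2 : ℝ) ^ R - 1) / γD - ((2 : ℝ) ^ R - 1) / γR) *
    (1 + ((2 : ℝ) ^ R / γD) * γE)⁻¹ * (1 + ((2 : ℝ) ^ R / γR) * γE)⁻¹

/-!
Writing `t = 1 / γ_D`, the outage probability along `γ_R = α γ_D` is
`g t = 1 - exp (-a t) (1 + b t)⁻¹ (1 + c t)⁻¹` with `a = (2^R - 1)(1 + 1/α)`, `b = 2^R γ_E`,
`c = 2^R γ_E / α`. Since `g 0 = 0`, the product `γ_D · 𝒫₃ = g t / t` is a difference quotient of
`g` at `0`, so it tends to `g' 0 = a + b + c`, which is the claimed constant.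
-/

open Topology

theorem tendsto_mul_comp_inv_atTop_of_hasDerivAt_zero {f : ℝ → ℝ} {L : ℝ}
    (hf : HasDerivAt f L 0) (hf0 : f 0 = 0) :
    Tendsto (fun x => x * f x⁻¹) atTop (𝓝 L) := by
  have hinv : Tendsto (fun x : ℝ => x⁻¹) atTop (𝓝[≠] 0) :=
    tendsto_nhdsWithin_iff.mpr ⟨tendsto_inv_atTop_zero,
      (eventually_gt_atTop 0).mono fun x hx => inv_ne_zero hx.ne'⟩
  refine ((hasDerivAt_iff_tendsto_slope.mp hf).comp hinv).congr fun x => ?_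
  simp [slope_def_field, hf0, div_eq_inv_mul]

theorem hasDerivAt_inv_one_add_mul_zero (b : ℝ) :
    HasDerivAt (fun x : ℝ => (1 + b * x)⁻¹) (-b) 0 := by
  have hlin : HasDerivAt (fun x : ℝ => 1 + b * x) b 0 := by
    simpa using ((hasDerivAt_id (0 : ℝ)).const_mul b).const_add 1
  simpa using hlin.fun_inv (by norm_num)

theorem hasDerivAt_one_sub_exp_mul_inv_mul_inv_zero (a b c : ℝ) :
    HasDerivAt (fun x : ℝ => 1 - exp (-(a * x)) * (1 + b * x)⁻¹ * (1 + c * x)⁻¹)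
      (a + b + c) 0 := by
  have hexp : HasDerivAt (fun x : ℝ => exp (-(a * x))) (-a) 0 := by
    simpa using (((hasDerivAt_id (0 : ℝ)).const_mul a).neg).exp
  refine (((hexp.fun_mul (hasDerivAt_inv_one_add_mul_zero b)).fun_mul
    (hasDerivAt_inv_one_add_mul_zero c)).const_sub 1).congr_deriv ?_
  norm_num
  ring

theorem P3_mul_eq {α x : ℝ} (hα : α ≠ 0) (hx : x ≠ 0) (γE R : ℝ) :
    P3 (α * x) x γE R =
      1 - exp (-(((2 : ℝ) ^ R - 1) * (1 + 1 / α) * x⁻¹)) * (1 + (2 : ℝ) ^ R * γE * x⁻¹)⁻¹ *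
        (1 + (2 : ℝ) ^ R * γE / α * x⁻¹)⁻¹ := by
  unfold P3
  congr 4
  · field_simp
    ring
  · field_simp
  · field_simp

/-- Theorem 8 (Case III, first high-SNR scenario): with `γ_E` fixed and `γ_R = α·γ_D → ∞`,
`γ_D · 𝒫₃ → 𝓜₃ = (2^R − 1)(1 + 1/α) + 2^R·γ_E·(1 + 1/α)`, and `𝓜₃ > 0`
(so the secrecy diversity order is 1). -/
theorem case3_asymptotic_fixed_eve (γE α R : ℝ) (hγE : 0 < γE) (hα : 0 < α) (hR : 0 < R) :
    Tendsto (fun γD : ℝ => γD * P3 (α * γD) γD γE R) atTop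
      (nhds (((2 : ℝ) ^ R - 1) * (1 + 1 / α) + (2 : ℝ) ^ R * γE * (1 + 1 / α))) ∧
    0 < ((2 : ℝ) ^ R - 1) * (1 + 1 / α) + (2 : ℝ) ^ R * γE * (1 + 1 / α) := by
  have h2R : 0 < (2 : ℝ) ^ R - 1 := by
    linarith [one_lt_rpow one_lt_two hR]
  refine ⟨?_, by positivity⟩
  have hlim := tendsto_mul_comp_inv_atTop_of_hasDerivAt_zero
    (hasDerivAt_one_sub_exp_mul_inv_mul_inv_zero (((2 : ℝ) ^ R - 1) * (1 + 1 / α))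
      ((2 : ℝ) ^ R * γE) ((2 : ℝ) ^ R * γE / α)) (by simp)
  convert hlim.congr' ?_ using 2
  · ring
  filter_upwards [eventually_gt_atTop 0] with x hx
  simp only [P3_mul_eq hα.ne' hx.ne']
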